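/- arXiv:2009.10147 — 2 statements merged into one kernel-verified Lean document; each statement's English description precedes it below -/
import Mathlib

section
/- If μ₁ > 1 and μ₂ > 1 and μ₃ < −1, then the relation μ₃(1 − μ₁μ₂) = 2 − μ₁ − μ₂ cannot hold; similarly it cannot hold if μ₁ < −1, μ₂ < −1, μ₃ > 1. Consequently a real quadratic map whose real fixed points are all strictly repelling cannot have fixed-point multipliers of mixed signs. -/
/-- The fixed-point relation `μ₃(1 − μ₁μ₂) = 2 − μ₁ − μ₂` cannot hold if
`μ₁ > 1, μ₂ > 1, μ₃ < −1`, nor if `μ₁ < −1, μ₂ < −1, μ₃ > 1`: the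
multipliers of all-strictly-repelling real fixed points of a real quadratic
map cannot have mixed signs. -/
theorem stmt_8 (μ₁ μ₂ μ₃ : ℝ) :
    (μ₁ > 1 → μ₂ > 1 → μ₃ < -1 → μ₃ * (1 - μ₁ * μ₂) ≠ 2 - μ₁ - μ₂) ∧
    (μ₁ < -1 → μ₂ < -1 → μ₃ > 1 → μ₃ * (1 - μ₁ * μ₂) ≠ 2 - μ₁ - μ₂) := by
  constructor
  · intro h1 h2 h3 h4
    have hp : 0 < (μ₁ - 1) * (μ₂ - 1) := mul_pos (by linarith) (by linarith)
    have hq : 0 < (-1 - μ₃) * (μ₁ * μ₂ - 1) := mul_pos (by linarith) (by nlinarith)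
    nlinarith [hp, hq]
  · intro h1 h2 h3 h4
    have hp : 0 < (-1 - μ₁) * (-1 - μ₂) := mul_pos (by linarith) (by linarith)
    have hq : 0 < (μ₃ - 1) * (μ₁ * μ₂ - 1) := mul_pos (by linarith) (by nlinarith)
    nlinarith [hp, hq]
end

section
/- Monotonicity of the unimodal kneading coordinate: Let f : I → I be continuous on an interval I with a single minimum at c (so f is strictly decreasing on I ∩ (−∞, c] and strictly increasing on I ∩ [c, ∞)). Define σ(x) = 0 if x = c, σ(x) = 1 if x > c, σ(x) = −1 if x < c, and for x ∈ I define k(x) = Σ_{h≥0} σ(x₀)σ(x₁)···σ(x_h)/2^{h+1} where x₀ = x and x_{j+1} = f(x_j). Then x < y implies k(x) ≤ k(y). -/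
/-!
Truncating the series after `n` terms gives `kₙ` with `k₀ = 0` and
`kₙ₊₁(x) = σ(x) (1 + kₙ(f x)) / 2`, hence `|kₙ| ≤ 1`. Each `kₙ` is monotone on `I`, by induction
on `n`: if `x < y` lie on the same side of `c`, then `f` reverses (left) or preserves (right) their
order and the common sign `σ = ∓1` restores it; otherwise `σ(x) ≤ 0 ≤ σ(y)` and `1 + kₙ ≥ 0` give
`kₙ₊₁(x) ≤ 0 ≤ kₙ₊₁(y)`. Monotonicity passes to the limit `k`.
-/

open Finset

/-- The sign coordinate for a unimodal map with minimum at `c`. -/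
noncomputable def kneadingSign (c x : ℝ) : ℝ :=
  if x = c then 0 else if c < x then 1 else -1

/-- The kneading coordinate `k(x) = Σ_{h≥0} σ(x₀)σ(x₁)⋯σ(x_h)/2^{h+1}`
along the orbit `x₀ = x`, `x_{j+1} = f(x_j)`. -/
noncomputable def kneadingCoord (f : ℝ → ℝ) (c x : ℝ) : ℝ :=
  ∑' h : ℕ, (∏ j ∈ Finset.range (h + 1), kneadingSign c (f^[j] x)) / 2 ^ (h + 1)

open Filter Topology

section KneadingSign

variable {c x : ℝ}

lemma kneadingSign_of_lt (h : x < c) : kneadingSign c x = -1 := by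
  simp [kneadingSign, h.ne, h.not_gt]

lemma kneadingSign_of_gt (h : c < x) : kneadingSign c x = 1 := by
  simp [kneadingSign, h.ne', h]

lemma kneadingSign_nonpos (h : x ≤ c) : kneadingSign c x ≤ 0 := by
  rcases h.lt_or_eq with h | rfl
  · simp [kneadingSign_of_lt h]
  · simp [kneadingSign]

lemma kneadingSign_nonneg (h : c ≤ x) : 0 ≤ kneadingSign c x := by
  rcases h.lt_or_eq with h | rfl
  · simp [kneadingSign_of_gt h]
  · simp [kneadingSign]

lemma abs_kneadingSign_le_one (c x : ℝ) : |kneadingSign c x| ≤ 1 := by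
  unfold kneadingSign; split_ifs <;> norm_num

end KneadingSign

noncomputable def kneadingPartialSum (f : ℝ → ℝ) (c : ℝ) (n : ℕ) (x : ℝ) : ℝ :=
  ∑ h ∈ range n, (∏ j ∈ range (h + 1), kneadingSign c (f^[j] x)) / 2 ^ (h + 1)

section KneadingPartialSum

variable {f : ℝ → ℝ} {c : ℝ}

lemma kneadingPartialSum_zero (x : ℝ) : kneadingPartialSum f c 0 x = 0 := by
  simp [kneadingPartialSum]

lemma kneadingPartialSum_succ (n : ℕ) (x : ℝ) :
    kneadingPartialSum f c (n + 1) x =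
      kneadingSign c x * (1 + kneadingPartialSum f c n (f x)) / 2 := by
  rw [kneadingPartialSum, kneadingPartialSum, sum_range_succ', mul_add, add_div, mul_sum, sum_div,
    add_comm (kneadingSign c x * 1 / 2)]
  congr 1
  · refine sum_congr rfl fun h _ => ?_
    rw [prod_range_succ' _ (h + 1)]
    simp only [Function.iterate_succ_apply, Function.iterate_zero_apply, pow_succ]
    ring
  · simp

lemma abs_kneadingPartialSum_le_one (n : ℕ) (x : ℝ) : |kneadingPartialSum f c n x| ≤ 1 := by
  induction n generalizing x with
  | zero => simp [kneadingPartialSum_zero]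
  | succ n ih =>
    rw [kneadingPartialSum_succ, abs_div, abs_mul, abs_two, div_le_one two_pos]
    calc |kneadingSign c x| * |1 + kneadingPartialSum f c n (f x)|
        ≤ 1 * (|1| + |kneadingPartialSum f c n (f x)|) :=
          mul_le_mul (abs_kneadingSign_le_one c x) (abs_add_le _ _) (abs_nonneg _) zero_le_one
      _ ≤ 2 := by rw [abs_one]; linarith [ih (f x)]

lemma tendsto_kneadingPartialSum (f : ℝ → ℝ) (c x : ℝ) :
    Tendsto (fun n => kneadingPartialSum f c n x) atTop (𝓝 (kneadingCoord f c x)) := by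
  refine (Summable.hasSum ?_).tendsto_sum_nat
  refine .of_norm_bounded (summable_geometric_two' 1) fun h => ?_
  rw [Real.norm_eq_abs, abs_div, abs_prod, abs_pow, abs_two, div_div, ← pow_succ']
  gcongr
  exact prod_le_one (fun _ _ => abs_nonneg _) fun j _ => abs_kneadingSign_le_one c _

lemma kneadingPartialSum_mono {I : Set ℝ} (hmap : Set.MapsTo f I I)
    (hdec : StrictAntiOn f (I ∩ Set.Iic c)) (hinc : StrictMonoOn f (I ∩ Set.Ici c)) (n : ℕ)
    {x y : ℝ} (hx : x ∈ I) (hy : y ∈ I) (hxy : x < y) :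
    kneadingPartialSum f c n x ≤ kneadingPartialSum f c n y := by
  induction n generalizing x y with
  | zero => simp [kneadingPartialSum_zero]
  | succ n ih =>
    simp only [kneadingPartialSum_succ]
    by_cases hyc : y < c
    · have hfxy := hdec ⟨hx, (hxy.trans hyc).le⟩ ⟨hy, hyc.le⟩ hxy
      have := ih (hmap hy) (hmap hx) hfxy
      rw [kneadingSign_of_lt (hxy.trans hyc), kneadingSign_of_lt hyc]
      linarith
    by_cases hcx : c < x
    · have hfxy := hinc ⟨hx, hcx.le⟩ ⟨hy, (hcx.trans hxy).le⟩ hxy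
      have := ih (hmap hx) (hmap hy) hfxy
      rw [kneadingSign_of_gt hcx, kneadingSign_of_gt (hcx.trans hxy)]
      linarith
    have weight_nonneg (z : ℝ) : 0 ≤ 1 + kneadingPartialSum f c n z := by
      linarith [abs_le.mp (abs_kneadingPartialSum_le_one (f := f) (c := c) n z)]
    calc kneadingSign c x * (1 + kneadingPartialSum f c n (f x)) / 2
        ≤ 0 := div_nonpos_of_nonpos_of_nonneg
          (mul_nonpos_of_nonpos_of_nonneg (kneadingSign_nonpos (not_lt.mp hcx))
            (weight_nonneg _)) zero_le_two
      _ ≤ kneadingSign c y * (1 + kneadingPartialSum f c n (f y)) / 2 := div_nonneg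
          (mul_nonneg (kneadingSign_nonneg (not_lt.mp hyc)) (weight_nonneg _)) zero_le_two

end KneadingPartialSum

theorem stmt_16_general (f : ℝ → ℝ) (I : Set ℝ) (c : ℝ)
    (hmap : Set.MapsTo f I I)
    (hdec : StrictAntiOn f (I ∩ Set.Iic c))
    (hinc : StrictMonoOn f (I ∩ Set.Ici c)) :
    ∀ x ∈ I, ∀ y ∈ I, x < y → kneadingCoord f c x ≤ kneadingCoord f c y :=
  fun _ hx _ hy hxy =>
    le_of_tendsto_of_tendsto' (tendsto_kneadingPartialSum f c _) (tendsto_kneadingPartialSum f c _)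
      fun n => kneadingPartialSum_mono hmap hdec hinc n hx hy hxy

/-- Monotonicity of the unimodal kneading coordinate: if `f` maps the
interval `I` into itself, is continuous on `I`, strictly decreasing to the
left of the critical point `c ∈ I` and strictly increasing to the right of
it, then `x < y` implies `k(x) ≤ k(y)` for `x, y ∈ I`. -/
theorem stmt_16 (f : ℝ → ℝ) (I : Set ℝ) (hI : I.OrdConnected) (c : ℝ) (hc : c ∈ I)
    (hmap : Set.MapsTo f I I) (hcont : ContinuousOn f I)
    (hdec : StrictAntiOn f (I ∩ Set.Iic c))
    (hinc : StrictMonoOn f (I ∩ Set.Ici c)) :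
    ∀ x ∈ I, ∀ y ∈ I, x < y → kneadingCoord f c x ≤ kneadingCoord f c y :=
  stmt_16_general f I c hmap hdec hinc
end
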